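/- arXiv:2101.09943 — 2 statements merged into one kernel-verified Lean document; each statement's English description precedes it below -/
import Mathlib

section
/- Let A : (0,∞) → [0,∞) be a nondecreasing, locally absolutely continuous, unbounded function and let δ ∈ (0,1) with γ := δ·n/(n-1) > 1 for some n ≥ 2. Suppose E ⊆ [1,∞) is a measurable set such that A(r)^γ ≤ C r A'(r) for almost every r ∈ E, for some constant C > 0. If A(r₀) > 0 for some r₀ ≥ 1, then ∫_E dr/r ≤ log r₀ + (C/(γ-1)) A(r₀)^{1-γ} < ∞. -/
/-!
Past `r₀` we have `A ≥ A r₀ > 0`, so the differential inequality forces `A` to be differentiable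
at almost every point of `E` (where `A` is not, `deriv A = 0`), and there it reads
`1 / r ≤ C / (γ - 1) · ψ'(r)` for `ψ = -A ^ (1 - γ)`. This `ψ` is nondecreasing and bounded above
by `0`, so Lebesgue's inequality `∫ₐᵇ ψ' ≤ ψ b - ψ a` for monotone functions bounds the logarithmic
measure of `E ∩ (r₀, ∞)` by `C / (γ - 1) · A r₀ ^ (1 - γ)`. The part `E ∩ [1, r₀]` contributes at
most `log r₀`.
-/

open MeasureTheory Set

theorem MonotoneOn.lintegral_Icc_deriv_le {f : ℝ → ℝ} {a b : ℝ} (hab : a ≤ b)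
    (hf : MonotoneOn f (Icc a b)) :
    ∫⁻ x in Icc a b, ENNReal.ofReal (deriv f x) ≤ ENNReal.ofReal (f b - f a) := by
  have hf' : MonotoneOn f (uIcc a b) := by rwa [uIcc_of_le hab]
  have hnonneg : 0 ≤ᵐ[volume.restrict (Ioo a b)] deriv f := by
    filter_upwards [ae_restrict_mem measurableSet_Ioo] with x hx
    rw [← derivWithin_of_mem_nhds (Icc_mem_nhds hx.1 hx.2)]
    exact hf.derivWithin_nonneg
  have hint : IntegrableOn (deriv f) (Ioo a b) :=
    (hf'.intervalIntegrable_deriv.1).mono_set Ioo_subset_Ioc_self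
  have hbound := hf'.intervalIntegral_deriv_mem_uIcc
  rw [uIcc_of_le (sub_nonneg.2 (hf (left_mem_Icc.2 hab) (right_mem_Icc.2 hab) hab)),
    intervalIntegral.integral_of_le hab, integral_Ioc_eq_integral_Ioo] at hbound
  rw [← setLIntegral_congr Ioo_ae_eq_Icc, ← ofReal_integral_eq_lintegral_ofReal hint hnonneg]
  exact ENNReal.ofReal_le_ofReal hbound.2

theorem MonotoneOn.lintegral_Ici_deriv_le {f : ℝ → ℝ} {a M : ℝ} (hf : MonotoneOn f (Ici a))
    (hM : ∀ x ∈ Ici a, f x ≤ M) :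
    ∫⁻ x in Ici a, ENNReal.ofReal (deriv f x) ≤ ENNReal.ofReal (M - f a) := by
  have hunion : ⋃ n : ℕ, Icc a (a + n) = Ici a := by
    refine Subset.antisymm (iUnion_subset fun n => Icc_subset_Ici_self) fun x hx => ?_
    obtain ⟨n, hn⟩ := exists_nat_ge (x - a)
    exact mem_iUnion.2 ⟨n, hx, by linarith⟩
  have hdir : Directed (· ⊆ ·) fun n : ℕ => Icc a (a + n) :=
    Monotone.directed_le fun m n hmn => Icc_subset_Icc_right (by gcongr)
  rw [← hunion, setLIntegral_iUnion_of_directed _ hdir]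
  refine iSup_le fun n => ?_
  have han : a ≤ a + n := le_add_of_nonneg_right n.cast_nonneg
  calc ∫⁻ x in Icc a (a + n), ENNReal.ofReal (deriv f x)
      ≤ ENNReal.ofReal (f (a + n) - f a) :=
        (hf.mono Icc_subset_Ici_self).lintegral_Icc_deriv_le han
    _ ≤ ENNReal.ofReal (M - f a) := by gcongr; exact hM _ han

theorem one_div_le_mul_deriv_neg_rpow {A : ℝ → ℝ} {γ C r : ℝ} (hγ : 1 < γ) (hr : 0 < r)
    (hAr : 0 < A r) (h : A r ^ γ ≤ C * r * deriv A r) :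
    1 / r ≤ C / (γ - 1) * deriv (fun s => -A s ^ (1 - γ)) r := by
  have hpow : 0 < A r ^ γ := Real.rpow_pos_of_pos hAr γ
  have hdA : DifferentiableAt ℝ A r := by
    by_contra hnd
    rw [deriv_zero_of_not_differentiableAt hnd, mul_zero] at h
    linarith
  have hderiv : deriv (fun s => -A s ^ (1 - γ)) r = (γ - 1) * deriv A r / A r ^ γ := by
    rw [(hdA.hasDerivAt.rpow_const (Or.inl hAr.ne')).fun_neg.deriv, show 1 - γ - 1 = -γ by ring,
      Real.rpow_neg hAr.le]
    field_simp
    ring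
  rw [hderiv, div_le_iff₀ hr]
  have hγ' : γ - 1 ≠ 0 := by linarith
  calc 1 ≤ C * r * deriv A r / A r ^ γ := (one_le_div hpow).2 h
    _ = C / (γ - 1) * ((γ - 1) * deriv A r / A r ^ γ) * r := by field_simp

theorem setLIntegral_one_div_le_log {s : Set ℝ} {b : ℝ} (hb : 1 ≤ b) (hs : s ⊆ Icc 1 b) :
    ∫⁻ r in s, ENNReal.ofReal (1 / r) ≤ ENNReal.ofReal (Real.log b) := by
  have hlog : MonotoneOn Real.log (Icc 1 b) :=
    Real.strictMonoOn_log.monotoneOn.mono fun x hx => zero_lt_one.trans_le hx.1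
  calc ∫⁻ r in s, ENNReal.ofReal (1 / r)
      ≤ ∫⁻ r in Icc 1 b, ENNReal.ofReal (deriv Real.log r) := by
        simp only [Real.deriv_log', one_div]
        exact lintegral_mono_set hs
    _ ≤ ENNReal.ofReal (Real.log b) := by
        simpa using hlog.lintegral_Icc_deriv_le hb

theorem setLIntegral_one_div_le_of_rpow_le_mul_deriv {A : ℝ → ℝ} {S : Set ℝ} {γ C a : ℝ}
    (hγ : 1 < γ) (hC : 0 ≤ C) (ha : 0 ≤ a) (hmono : MonotoneOn A (Ici a)) (hAa : 0 < A a)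
    (hS : MeasurableSet S) (hSa : S ⊆ Ioi a) (h : ∀ᵐ r, r ∈ S → A r ^ γ ≤ C * r * deriv A r) :
    ∫⁻ r in S, ENNReal.ofReal (1 / r) ≤ ENNReal.ofReal (C / (γ - 1) * A a ^ (1 - γ)) := by
  have hApos : ∀ x ∈ Ici a, 0 < A x := fun x hx => hAa.trans_le (hmono self_mem_Ici hx hx)
  have hf : MonotoneOn (fun s => -A s ^ (1 - γ)) (Ici a) := fun x hx y hy hxy =>
    neg_le_neg (Real.rpow_le_rpow_of_nonpos (hApos x hx) (hmono hx hy hxy) (by linarith))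
  have hf0 : ∀ x ∈ Ici a, -A x ^ (1 - γ) ≤ 0 := fun x hx =>
    neg_nonpos.2 (Real.rpow_nonneg (hApos x hx).le _)
  have hK : 0 ≤ C / (γ - 1) := div_nonneg hC (by linarith)
  calc ∫⁻ r in S, ENNReal.ofReal (1 / r)
      ≤ ∫⁻ r in S, ENNReal.ofReal (C / (γ - 1)) *
          ENNReal.ofReal (deriv (fun s => -A s ^ (1 - γ)) r) := by
        refine lintegral_mono_ae ?_
        filter_upwards [ae_restrict_mem hS, ae_restrict_of_ae h] with r hrS hr
        have hra : a < r := hSa hrS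
        rw [← ENNReal.ofReal_mul hK]
        exact ENNReal.ofReal_le_ofReal (one_div_le_mul_deriv_neg_rpow hγ (ha.trans_lt hra)
          (hApos r hra.le) (hr hrS))
    _ = ENNReal.ofReal (C / (γ - 1)) *
          ∫⁻ r in S, ENNReal.ofReal (deriv (fun s => -A s ^ (1 - γ)) r) :=
        lintegral_const_mul' _ _ ENNReal.ofReal_ne_top
    _ ≤ ENNReal.ofReal (C / (γ - 1)) *
          ∫⁻ r in Ici a, ENNReal.ofReal (deriv (fun s => -A s ^ (1 - γ)) r) := by
        gcongr
        exact hSa.trans Ioi_subset_Ici_self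
    _ ≤ ENNReal.ofReal (C / (γ - 1)) * ENNReal.ofReal (0 - -A a ^ (1 - γ)) := by
        gcongr
        exact hf.lintegral_Ici_deriv_le hf0
    _ = ENNReal.ofReal (C / (γ - 1) * A a ^ (1 - γ)) := by
        rw [← ENNReal.ofReal_mul hK, zero_sub, neg_neg]

theorem stmt3_general {n : ℕ} (hn : 2 ≤ n) (A : ℝ → ℝ) (δ C r₀ : ℝ)
    (hδl : ((n : ℝ) - 1) / n < δ)
    (hmono : MonotoneOn A (Set.Ioi (0 : ℝ)))
    (E : Set ℝ) (hE : E ⊆ Set.Ici 1) (hEm : MeasurableSet E)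
    (hC : 0 < C)
    (hdiff : ∀ᵐ r ∂volume, r ∈ E →
      A r ^ (δ * n / ((n : ℝ) - 1)) ≤ C * r * deriv A r)
    (hr₀ : 1 ≤ r₀) (hA : 0 < A r₀) :
    ∫⁻ r in E, ENNReal.ofReal (1 / r) ≤
      ENNReal.ofReal (Real.log r₀ +
        C / (δ * n / ((n : ℝ) - 1) - 1) * A r₀ ^ (1 - δ * n / ((n : ℝ) - 1))) := by
  set γ := δ * n / ((n : ℝ) - 1)
  have hn' : (2 : ℝ) ≤ n := by exact_mod_cast hn
  have hγ : 1 < γ := by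
    rw [div_lt_iff₀ (by linarith)] at hδl
    rw [lt_div_iff₀ (by linarith)]
    linarith
  have hsplit : E ⊆ (E ∩ Icc 1 r₀) ∪ (E ∩ Ioi r₀) := fun r hr =>
    (le_or_gt r r₀).imp (fun h => ⟨hr, hE hr, h⟩) fun h => ⟨hr, h⟩
  have hbound : 0 ≤ C / (γ - 1) * A r₀ ^ (1 - γ) :=
    mul_nonneg (div_nonneg hC.le (by linarith)) (Real.rpow_nonneg hA.le _)
  calc ∫⁻ r in E, ENNReal.ofReal (1 / r)
      ≤ (∫⁻ r in E ∩ Icc 1 r₀, ENNReal.ofReal (1 / r)) +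
          ∫⁻ r in E ∩ Ioi r₀, ENNReal.ofReal (1 / r) :=
        (lintegral_mono_set hsplit).trans (lintegral_union_le _ _ _)
    _ ≤ ENNReal.ofReal (Real.log r₀) + ENNReal.ofReal (C / (γ - 1) * A r₀ ^ (1 - γ)) :=
        add_le_add (setLIntegral_one_div_le_log hr₀ inter_subset_right)
          (setLIntegral_one_div_le_of_rpow_le_mul_deriv hγ hC.le (by linarith)
            (hmono.mono fun x hx => (zero_lt_one.trans_le hr₀).trans_le hx) hA
            (hEm.inter measurableSet_Ioi) inter_subset_right
            (hdiff.mono fun r hr hrS => hr hrS.1))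
    _ = _ := (ENNReal.ofReal_add (Real.log_nonneg hr₀) hbound).symm

/-- a differential inequality on a set `E` forces `E` to have finite
logarithmic measure, with an explicit bound. Here `γ = δ·n/(n-1) > 1`. -/
theorem stmt3 {n : ℕ} (hn : 2 ≤ n) (A : ℝ → ℝ) (δ C r₀ : ℝ)
    (hδl : ((n : ℝ) - 1) / n < δ) (hδu : δ < 1)
    (hA0 : ∀ r, 0 < r → 0 ≤ A r)
    (hmono : MonotoneOn A (Set.Ioi (0 : ℝ)))
    (hunb : ∀ M : ℝ, ∃ r, 0 < r ∧ M < A r)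
    (hftc : ∀ a b : ℝ, 0 < a → a ≤ b →
      IntervalIntegrable (deriv A) volume a b ∧ A b - A a = ∫ t in a..b, deriv A t)
    (E : Set ℝ) (hE : E ⊆ Set.Ici 1) (hEm : MeasurableSet E)
    (hC : 0 < C)
    (hdiff : ∀ᵐ r ∂volume, r ∈ E →
      A r ^ (δ * n / ((n : ℝ) - 1)) ≤ C * r * deriv A r)
    (hr₀ : 1 ≤ r₀) (hA : 0 < A r₀) :
    ∫⁻ r in E, ENNReal.ofReal (1 / r) ≤
      ENNReal.ofReal (Real.log r₀ +
        C / (δ * n / ((n : ℝ) - 1) - 1) * A r₀ ^ (1 - δ * n / ((n : ℝ) - 1))) :=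
  stmt3_general hn A δ C r₀ hδl hmono E hE hEm hC hdiff hr₀ hA
end

section
/- Let A : (0,∞) → [0,∞) be nondecreasing and unbounded, and let δ ∈ ((n-1)/n, 1) for some n ≥ 2. Let E ⊆ [1,∞) be the set of radii r ≥ 1 at which A(r)^δ ≤ c · r^{(n-1)/n} · A'(r)^{(n-1)/n} for a constant c > 0 (assuming A is differentiable a.e.). If A(r₀) > 0 for some r₀ ≥ 1, then ∫_E dr/r < ∞ and, moreover, for any B : (0,∞) → ℝ with |B(r) − A(r)| ≤ A(r)^δ for all r ∉ E sufficiently large, one has lim_{r→∞, r∉E} B(r)/A(r) = 1. -/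
open MeasureTheory Filter Topology

/-- the exceptional set `E` defined by the Hölder-type estimate has
finite logarithmic measure, and any `B` with `|B − A| ≤ A^δ` off `E` satisfies
`B/A → 1` as `r → ∞` outside `E`. -/
theorem stmt10 {n : ℕ} (hn : 2 ≤ n) (A : ℝ → ℝ) (δ c r₀ : ℝ)
    (hδl : ((n : ℝ) - 1) / n < δ) (hδu : δ < 1) (hc : 0 < c)
    (hA0 : ∀ r, 0 ≤ A r) (hmono : Monotone A)
    (hunb : ∀ M : ℝ, ∃ r, M < A r)
    (hr₀ : 1 ≤ r₀) (hApos : 0 < A r₀)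
    (E : Set ℝ)
    (hEdef : E = {r : ℝ | 1 ≤ r ∧
      A r ^ δ ≤ c * r ^ (((n : ℝ) - 1) / n) * deriv A r ^ (((n : ℝ) - 1) / n)}) :
    (∫⁻ r in E, ENNReal.ofReal (1 / r)) < ⊤ ∧
      ∀ B : ℝ → ℝ,
        (∀ᶠ r in atTop ⊓ 𝓟 Eᶜ, |B r - A r| ≤ A r ^ δ) →
        Tendsto (fun r => B r / A r) (atTop ⊓ 𝓟 Eᶜ) (nhds 1) := by
  have hn2 : (2:ℝ) ≤ (n:ℝ) := by exact_mod_cast hn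
  have hn1 : (0:ℝ) < (n:ℝ) - 1 := by linarith
  have hnpos : (0:ℝ) < (n:ℝ) := by linarith
  set m : ℝ := ((n:ℝ) - 1) / n with hmdef
  have hm0 : 0 < m := div_pos hn1 hnpos
  have hδ0 : 0 < δ := hm0.trans hδl
  set q : ℝ := (n:ℝ) / ((n:ℝ) - 1) with hqdef
  have hq0 : 0 < q := div_pos hnpos hn1
  have hmq : m * q = 1 := by
    rw [hmdef, hqdef]; field_simp
  set p : ℝ := δ * q with hpdef
  have hp1 : 1 < p := by
    calc (1:ℝ) = m * q := hmq.symm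
      _ < δ * q := by exact mul_lt_mul_of_pos_right hδl hq0
  have hp0' : (0:ℝ) < p - 1 := by linarith
  have h1p : (1:ℝ) - p ≤ 0 := by linarith
  set a₀ : ℝ := A r₀ with ha₀def
  have ha₀ : 0 < a₀ := hApos
  set G : ℝ → ℝ := fun r => -(p-1)⁻¹ * max (A r) a₀ ^ (1-p) with hGdef
  have hmaxpos : ∀ r, 0 < max (A r) a₀ := fun r => lt_of_lt_of_le ha₀ (le_max_right _ _)
  have hcoef : -(p-1)⁻¹ ≤ 0 := neg_nonpos.mpr (inv_nonneg.mpr hp0'.le)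
  have hGmono : Monotone G := by
    intro x y hxy
    have h := Real.rpow_le_rpow_of_nonpos (hmaxpos x) (max_le_max (hmono hxy) le_rfl) h1p
    exact mul_le_mul_of_nonpos_left h hcoef
  have hGub : ∀ r, G r ≤ 0 := fun r =>
    mul_nonpos_of_nonpos_of_nonneg hcoef (Real.rpow_nonneg (hmaxpos r).le _)
  have hGlb : ∀ r, -(p-1)⁻¹ * a₀ ^ (1-p) ≤ G r := fun r =>
    mul_le_mul_of_nonpos_left (Real.rpow_le_rpow_of_nonpos ha₀ (le_max_right _ _) h1p) hcoef
  have hg_ub : ∀ r, hGmono.stieltjesFunction r ≤ 0 := by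
    intro r
    rw [hGmono.stieltjesFunction_eq]
    exact (hGmono.rightLim_le (lt_add_one r)).trans (hGub (r+1))
  have hg_lb : ∀ r, -(p-1)⁻¹ * a₀ ^ (1-p) ≤ hGmono.stieltjesFunction r := by
    intro r
    rw [hGmono.stieltjesFunction_eq]
    exact (hGlb r).trans (hGmono.le_rightLim le_rfl)
  have htop : Tendsto hGmono.stieltjesFunction atTop (𝓝 (⨆ x, hGmono.stieltjesFunction x)) :=
    tendsto_atTop_ciSup hGmono.stieltjesFunction.mono
      ⟨0, by rintro y ⟨x, rfl⟩; exact hg_ub x⟩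
  have hbot : Tendsto hGmono.stieltjesFunction atBot (𝓝 (⨅ x, hGmono.stieltjesFunction x)) :=
    tendsto_atBot_ciInf hGmono.stieltjesFunction.mono
      ⟨-(p-1)⁻¹ * a₀ ^ (1-p), by rintro y ⟨x, rfl⟩; exact hg_lb x⟩
  haveI : IsFiniteMeasure hGmono.stieltjesFunction.measure :=
    hGmono.stieltjesFunction.isFiniteMeasure hbot htop
  -- measurability of E
  have hEm : MeasurableSet E := by
    rw [hEdef]
    have h1 : Measurable fun r : ℝ => A r ^ δ :=
      ((continuous_id.rpow_const fun x => Or.inr hδ0.le).measurable).comp hmono.measurable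
    have h2 : Measurable fun r : ℝ => c * r ^ m * deriv A r ^ m := by
      have hA' : Measurable fun r : ℝ => deriv A r := measurable_deriv A
      have hrm : Measurable fun t : ℝ => t ^ m :=
        (continuous_id.rpow_const fun x => Or.inr hm0.le).measurable
      exact (measurable_const.mul (hrm.comp measurable_id)).mul (hrm.comp hA')
    exact ((measurableSet_le measurable_const measurable_id).inter (measurableSet_le h1 h2))
  -- key a.e. inequality on E ∩ Ioi r₀
  have key : ∀ᵐ x, x ∈ E ∩ Set.Ioi r₀ →
      ENNReal.ofReal (1/x) ≤ ENNReal.ofReal (c^q) *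
        hGmono.stieltjesFunction.measure.rnDeriv volume x := by
    filter_upwards [hmono.ae_hasDerivAt, hGmono.ae_hasDerivAt] with x hAx hGx hx
    obtain ⟨hxE, hxr⟩ := hx
    rw [hEdef] at hxE
    obtain ⟨hx1, hineq⟩ := hxE
    have hxr' : r₀ < x := hxr
    have hx0 : (0:ℝ) < x := by linarith
    have hAxpos : 0 < A x := ha₀.trans_le (hmono hxr'.le)
    have hd0 : 0 ≤ deriv A x := by rw [hAx.deriv]; exact ENNReal.toReal_nonneg
    have hAd : HasDerivAt A (deriv A x) x := hAx.differentiableAt.hasDerivAt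
    have hchain : HasDerivAt (fun y => -(p-1)⁻¹ * A y ^ (1-p))
        (-(p-1)⁻¹ * (deriv A x * (1-p) * A x ^ (1-p-1))) x :=
      (hAd.rpow_const (Or.inl hAxpos.ne')).const_mul _
    have heq : G =ᶠ[𝓝 x] fun y => -(p-1)⁻¹ * A y ^ (1-p) := by
      filter_upwards [isOpen_Ioi.mem_nhds hxr'] with y hy
      have : a₀ ≤ A y := hmono (le_of_lt hy)
      rw [hGdef]
      simp only []
      rw [max_eq_left this]
    have hG' : HasDerivAt G (-(p-1)⁻¹ * (deriv A x * (1-p) * A x ^ (1-p-1))) x :=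
      hchain.congr_of_eventuallyEq heq
    have huniq : ((hGmono.stieltjesFunction.measure.rnDeriv volume x).toReal)
        = -(p-1)⁻¹ * (deriv A x * (1-p) * A x ^ (1-p-1)) := hGx.unique hG'
    have hsimp : -(p-1)⁻¹ * (deriv A x * (1-p) * A x ^ (1-p-1))
        = deriv A x * A x ^ (-p) := by
      have h1 : (1:ℝ) - p - 1 = -p := by ring
      rw [h1]
      have hne : p - 1 ≠ 0 := hp0'.ne'
      field_simp
      ring
    have hkey2 : A x ^ p ≤ c^q * x * deriv A x := by
      have h2 : (A x ^ δ) ^ q ≤ (c * x ^ m * deriv A x ^ m) ^ q :=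
        Real.rpow_le_rpow (Real.rpow_nonneg (hA0 x) δ) hineq hq0.le
      rw [← Real.rpow_mul (hA0 x)] at h2
      have h3 : (c * x ^ m * deriv A x ^ m) ^ q = c ^ q * x * deriv A x := by
        rw [Real.mul_rpow (by positivity) (Real.rpow_nonneg hd0 m),
          Real.mul_rpow hc.le (Real.rpow_nonneg hx0.le m),
          ← Real.rpow_mul hx0.le, hmq, Real.rpow_one,
          ← Real.rpow_mul hd0, hmq, Real.rpow_one]
      rw [h3] at h2
      exact h2
    have hfinal : 1/x ≤ c^q * (deriv A x * A x ^ (-p)) := by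
      rw [Real.rpow_neg (hA0 x), div_le_iff₀ hx0]
      have hAp : (0:ℝ) < A x ^ p := Real.rpow_pos_of_pos hAxpos p
      calc (1:ℝ) = A x ^ p * (A x ^ p)⁻¹ := (mul_inv_cancel₀ hAp.ne').symm
        _ ≤ (c^q * x * deriv A x) * (A x ^ p)⁻¹ :=
            mul_le_mul_of_nonneg_right hkey2 (inv_nonneg.2 hAp.le)
        _ = c ^ q * (deriv A x * (A x ^ p)⁻¹) * x := by ring
    calc ENNReal.ofReal (1/x)
        ≤ ENNReal.ofReal (c^q * (deriv A x * A x ^ (-p))) :=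
          ENNReal.ofReal_le_ofReal hfinal
      _ = ENNReal.ofReal (c^q) * ENNReal.ofReal (deriv A x * A x ^ (-p)) :=
          ENNReal.ofReal_mul (by positivity)
      _ ≤ ENNReal.ofReal (c^q) * hGmono.stieltjesFunction.measure.rnDeriv volume x := by
          apply mul_le_mul_right
          rw [← hsimp, ← huniq]
          exact ENNReal.ofReal_toReal_le
  constructor
  · -- finiteness of the logarithmic integral over E
    have hsplit : E ⊆ (E ∩ Set.Icc 1 r₀) ∪ (E ∩ Set.Ioi r₀) := by
      intro x hx
      have hx1 : 1 ≤ x := by rw [hEdef] at hx; exact hx.1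
      rcases le_or_gt x r₀ with h | h
      · exact Or.inl ⟨hx, hx1, h⟩
      · exact Or.inr ⟨hx, h⟩
    have hb1 : (∫⁻ r in E ∩ Set.Icc 1 r₀, ENNReal.ofReal (1/r)) < ⊤ := by
      have h1 : (∫⁻ r in E ∩ Set.Icc 1 r₀, ENNReal.ofReal (1/r)) ≤
          ∫⁻ r in Set.Icc 1 r₀, ENNReal.ofReal (1/r) :=
        lintegral_mono_set Set.inter_subset_right
      have h2 : (∫⁻ r in Set.Icc 1 r₀, ENNReal.ofReal (1/r)) ≤
          ∫⁻ _ in Set.Icc 1 r₀, 1 := by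
        apply lintegral_mono_ae
        rw [ae_restrict_iff' measurableSet_Icc]
        refine Filter.Eventually.of_forall fun x hx => ?_
        have hx1 : (1:ℝ) ≤ x := hx.1
        have : 1/x ≤ 1 := by
          rw [div_le_one (by linarith)]; exact hx1
        calc ENNReal.ofReal (1/x) ≤ ENNReal.ofReal 1 := ENNReal.ofReal_le_ofReal this
          _ = 1 := ENNReal.ofReal_one
      have h3 : (∫⁻ _ in Set.Icc 1 r₀, (1:ENNReal)) = volume (Set.Icc 1 r₀) := by
        simp
      refine lt_of_le_of_lt (h1.trans (h2.trans_eq h3)) ?_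
      rw [Real.volume_Icc]
      exact ENNReal.ofReal_lt_top
    have hb2 : (∫⁻ r in E ∩ Set.Ioi r₀, ENNReal.ofReal (1/r)) < ⊤ := by
      have hSm : MeasurableSet (E ∩ Set.Ioi r₀) := hEm.inter measurableSet_Ioi
      have h1 : (∫⁻ r in E ∩ Set.Ioi r₀, ENNReal.ofReal (1/r)) ≤
          ∫⁻ r in E ∩ Set.Ioi r₀,
            ENNReal.ofReal (c^q) * hGmono.stieltjesFunction.measure.rnDeriv volume r := by
        apply lintegral_mono_ae
        rw [ae_restrict_iff' hSm]
        exact key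
      have h2 : (∫⁻ r in E ∩ Set.Ioi r₀,
            ENNReal.ofReal (c^q) * hGmono.stieltjesFunction.measure.rnDeriv volume r)
          = ENNReal.ofReal (c^q) *
            ∫⁻ r in E ∩ Set.Ioi r₀, hGmono.stieltjesFunction.measure.rnDeriv volume r :=
        lintegral_const_mul' _ _ ENNReal.ofReal_ne_top
      have h3 : (∫⁻ r in E ∩ Set.Ioi r₀, hGmono.stieltjesFunction.measure.rnDeriv volume r)
          ≤ hGmono.stieltjesFunction.measure (E ∩ Set.Ioi r₀) :=
        Measure.setLIntegral_rnDeriv_le _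
      refine lt_of_le_of_lt (h1.trans_eq h2) ?_
      exact ENNReal.mul_lt_top ENNReal.ofReal_lt_top (h3.trans_lt (measure_lt_top _ _))
    calc (∫⁻ r in E, ENNReal.ofReal (1/r))
        ≤ ∫⁻ r in (E ∩ Set.Icc 1 r₀) ∪ (E ∩ Set.Ioi r₀), ENNReal.ofReal (1/r) :=
          lintegral_mono_set hsplit
      _ ≤ (∫⁻ r in E ∩ Set.Icc 1 r₀, ENNReal.ofReal (1/r)) +
          ∫⁻ r in E ∩ Set.Ioi r₀, ENNReal.ofReal (1/r) := lintegral_union_le _ _ _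
      _ < ⊤ := ENNReal.add_lt_top.mpr ⟨hb1, hb2⟩
  · -- the limit statement
    intro B hB
    set l : Filter ℝ := atTop ⊓ 𝓟 Eᶜ with hldef
    have hl : l ≤ atTop := inf_le_left
    have hAtop : Tendsto A atTop atTop :=
      tendsto_atTop_atTop_of_monotone hmono (fun b => (hunb b).imp fun r hr => hr.le)
    have hAl : Tendsto A l atTop := hAtop.mono_left hl
    have hApos' : ∀ᶠ r in l, 0 < A r := hAl.eventually (eventually_gt_atTop 0)
    have hbound : Tendsto (fun r => A r ^ (δ-1)) l (𝓝 0) := by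
      have h1 : Tendsto (fun t : ℝ => t ^ (δ-1)) atTop (𝓝 0) := by
        have := tendsto_rpow_neg_atTop (y := 1 - δ) (by linarith)
        simpa [neg_sub] using this
      exact h1.comp hAl
    have hzero : Tendsto (fun r => B r / A r - 1) l (𝓝 0) := by
      apply squeeze_zero_norm' _ hbound
      filter_upwards [hB, hApos'] with r h1 h2
      have hAne : A r ≠ 0 := h2.ne'
      have heq : B r / A r - 1 = (B r - A r) / A r := by field_simp
      rw [Real.norm_eq_abs, heq, abs_div, abs_of_pos h2]
      calc |B r - A r| / A r ≤ A r ^ δ / A r := by gcongr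
        _ = A r ^ (δ - 1) := by
            rw [Real.rpow_sub h2, Real.rpow_one]
    have := hzero.add (tendsto_const_nhds (x := (1:ℝ)) (f := l))
    simpa using this
end
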